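/- arXiv:0907.2946 — 2 statements merged into one kernel-verified Lean document; each statement's English description precedes it below -/
import Mathlib

section
/- Let ξ be a root of unity, d a positive integer, and χ a Dirichlet character mod d. With T_{k,χ,ξ}(N) := ∑_{l=0}^{N} χ(l) ξ^l l^k, one has the formal power series identity ((ξ^{Nd} e^{Ndt} − 1)/(ξ^d e^{dt} − 1)) · ∑_{i=0}^{d−1} χ(i) ξ^i e^{it} = ∑_{k≥0} T_{k,χ,ξ}(Nd−1) t^k/k! for every positive integer N. -/
/-- `e^{at}` as a formal power series over `ℂ`. -/
noncomputable def expS (a : ℂ) : PowerSeries ℂ :=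
  PowerSeries.mk fun n => a ^ n / n.factorial

lemma expS_eq_rescale (a : ℂ) : expS a = PowerSeries.rescale a (PowerSeries.exp ℂ) := by
  ext n
  simp [expS, PowerSeries.coeff_rescale, PowerSeries.coeff_exp, div_eq_mul_inv, mul_comm]

lemma expS_nat (n : ℕ) : expS (n : ℂ) = (PowerSeries.exp ℂ) ^ n := by
  rw [expS_eq_rescale, PowerSeries.exp_pow_eq_rescale_exp]

lemma mk_sum (M : ℕ) (c : ℕ → ℂ) :
    (PowerSeries.mk fun k => (∑ l ∈ Finset.range M, c l * (l : ℂ) ^ k) / k.factorial) =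
      ∑ l ∈ Finset.range M, PowerSeries.C (R := ℂ) (c l) * expS l := by
  ext k
  simp [expS, Finset.sum_div, PowerSeries.coeff_mk, mul_div_assoc]

lemma reindex (N d : ℕ) (f : ℕ → PowerSeries ℂ) :
    ∑ l ∈ Finset.range (N * d), f l =
      ∑ j ∈ Finset.range N, ∑ i ∈ Finset.range d, f (j * d + i) := by
  induction N with
  | zero => simp
  | succ n ih =>
      rw [Nat.succ_mul, Finset.sum_range_add, ih, Finset.sum_range_succ]

/-- The generating function identity for twisted character power sums
`T_{k,χ,ξ}(Nd-1) = ∑_{l=0}^{Nd-1} χ(l) ξ^l l^k`, stated with denominators cleared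
(the quotient `(ξ^{Nd}e^{Ndt}-1)/(ξ^d e^{dt}-1)` exists since `ℂ[[t]]` is a domain). -/
theorem twisted_power_sum_generating_function
    (d N : ℕ) (hd : 0 < d) (hN : 0 < N) (ξ : ℂ) (hξ : ∃ k : ℕ, 0 < k ∧ ξ ^ k = 1)
    (χ : DirichletCharacter ℂ d) :
    (PowerSeries.mk fun k =>
        (∑ l ∈ Finset.range (N * d), χ (l : ZMod d) * ξ ^ l * (l : ℂ) ^ k) / k.factorial) *
        (PowerSeries.C (R := ℂ) (ξ ^ d) * expS d - 1) =
      (PowerSeries.C (R := ℂ) (ξ ^ (N * d)) * expS ((N * d : ℕ) : ℂ) - 1) *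
        ∑ i ∈ Finset.range d, PowerSeries.C (R := ℂ) (χ (i : ZMod d) * ξ ^ i) * expS i := by
  have key : ∀ a : ℕ, PowerSeries.C (R := ℂ) (ξ ^ a) * expS a = (PowerSeries.C (R := ℂ) ξ * PowerSeries.exp ℂ) ^ a := by
    intro a
    rw [expS_nat, mul_pow, map_pow]
  set x : PowerSeries ℂ := PowerSeries.C (R := ℂ) ξ * PowerSeries.exp ℂ with hx
  have h1 : (PowerSeries.mk fun k =>
      (∑ l ∈ Finset.range (N * d), χ (l : ZMod d) * ξ ^ l * (l : ℂ) ^ k) / k.factorial) =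
      ∑ l ∈ Finset.range (N * d), PowerSeries.C (R := ℂ) (χ (l : ZMod d)) * x ^ l := by
    rw [mk_sum (N * d) (fun l => χ (l : ZMod d) * ξ ^ l)]
    refine Finset.sum_congr rfl fun l _ => ?_
    rw [map_mul, mul_assoc, key]
  have h2 : ∀ i : ℕ, PowerSeries.C (R := ℂ) (χ (i : ZMod d) * ξ ^ i) * expS i =
      PowerSeries.C (R := ℂ) (χ (i : ZMod d)) * x ^ i := by
    intro i
    rw [map_mul, mul_assoc, key]
  rw [h1, key (N * d)]
  simp only [h2]
  have hsplit : ∑ l ∈ Finset.range (N * d), PowerSeries.C (R := ℂ) (χ (l : ZMod d)) * x ^ l =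
      (∑ j ∈ Finset.range N, (x ^ d) ^ j) *
        ∑ i ∈ Finset.range d, PowerSeries.C (R := ℂ) (χ (i : ZMod d)) * x ^ i := by
    rw [reindex, Finset.sum_mul]
    refine Finset.sum_congr rfl fun j _ => ?_
    rw [Finset.mul_sum]
    refine Finset.sum_congr rfl fun i _ => ?_
    have hcast : ((j * d + i : ℕ) : ZMod d) = (i : ZMod d) := by
      push_cast
      simp [ZMod.natCast_self]
    rw [hcast, pow_add, pow_mul]
    ring
  rw [hsplit, key d, mul_comm (∑ j ∈ Finset.range N, (x ^ d) ^ j), mul_assoc,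
    geom_sum_mul, ← pow_mul, mul_comm d N, mul_comm]
end

section
/- Let d, w₁, w₂ be positive integers, ξ a root of unity, and χ a Dirichlet character mod d. With B_{n,χ,ξ}(x) the generalized twisted Bernoulli polynomials and T_{k,χ,ξ}(N) = ∑_{l=0}^{N} χ(l) ξ^l l^k, for every n ≥ 0: ∑_{j=0}^{n} C(n,j) w₂^j w₁^{n−j−1} B_{n−j,χ,ξ^{w₁}}(w₂ x) T_{j,χ,ξ^{w₂}}(w₁ d − 1) = ∑_{j=0}^{n} C(n,j) w₁^j w₂^{n−j−1} B_{n−j,χ,ξ^{w₂}}(w₁ x) T_{j,χ,ξ^{w₁}}(w₂ d − 1), as polynomials in x (interpreting the factors w₁^{−1}, w₂^{−1} by multiplying both sides by w₁w₂). -/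
open PowerSeries Finset

lemma expS_eq (a : ℂ) : expS a = rescale a (PowerSeries.exp ℂ) := by
  ext n
  simp [expS, coeff_rescale, PowerSeries.coeff_exp, mul_comm, div_eq_mul_inv,
    Algebra.algebraMap_self]

lemma expS_mul (a b : ℂ) : expS a * expS b = expS (a + b) := by
  rw [expS_eq, expS_eq, expS_eq, PowerSeries.exp_mul_exp_eq_exp_add]

lemma rescale_expS (b a : ℂ) : rescale b (expS a) = expS (a * b) := by
  rw [expS_eq, expS_eq, rescale_rescale]

lemma expS_pow (a : ℂ) (k : ℕ) : expS a ^ k = expS (k * a) := by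
  induction k with
  | zero =>
      ext n
      simp [expS]
      cases n <;> simp
  | succ k ih =>
      rw [pow_succ, ih, expS_mul]
      push_cast
      ring_nf

lemma rescale_C' (r b : ℂ) : rescale r (PowerSeries.C b) = PowerSeries.C b := by
  ext n
  simp only [coeff_rescale, PowerSeries.coeff_C]
  split_ifs with h
  · simp [h]
  · simp

lemma D_ne_zero (c : ℂ) (a : ℂ) (ha : a ≠ 0) :
    PowerSeries.C c * expS a - 1 ≠ 0 := by
  intro h
  by_cases hc : c = 1
  · have h1 := congrArg (PowerSeries.coeff 1) h
    simp [expS, hc, PowerSeries.coeff_one] at h1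
    exact ha h1
  · have h0 := congrArg (PowerSeries.coeff 0) h
    simp [expS, PowerSeries.coeff_zero_eq_constantCoeff] at h0
    exact hc (by rwa [sub_eq_zero] at h0)

lemma sum_range_mul' {M : Type*} [AddCommMonoid M] (w d : ℕ) (f : ℕ → M) :
    ∑ l ∈ range (w * d), f l = ∑ i ∈ range w, ∑ a ∈ range d, f (d * i + a) := by
  induction w with
  | zero => simp
  | succ w ih =>
      rw [Nat.succ_mul, Finset.sum_range_add, ih, Finset.sum_range_succ, Nat.mul_comm w d]

lemma S_mul_D (d w : ℕ) (χ : DirichletCharacter ℂ d) (η v : ℂ) :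
    (∑ l ∈ range (w * d), PowerSeries.C (χ (l : ZMod d) * η ^ l) * expS (v * l)) *
        (PowerSeries.C (η ^ d) * expS (v * d) - 1) =
      (∑ a ∈ range d, PowerSeries.C (χ (a : ZMod d) * η ^ a) * expS (v * a)) *
        (PowerSeries.C (η ^ (d * w)) * expS (v * d * w) - 1) := by
  rw [sum_range_mul']
  have hterm : ∀ i a : ℕ, a ∈ range d →
      PowerSeries.C (χ ((d * i + a : ℕ) : ZMod d) * η ^ (d * i + a)) * expS (v * (d * i + a : ℕ))
        = (PowerSeries.C (χ (a : ZMod d) * η ^ a) * expS (v * a)) *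
          (PowerSeries.C (η ^ d) * expS (v * d)) ^ i := by
    intro i a _
    have hcast : ((d * i + a : ℕ) : ZMod d) = (a : ZMod d) := by
      push_cast [ZMod.natCast_self]; ring
    rw [hcast]
    have h1 : v * ((d * i + a : ℕ) : ℂ) = v * a + i * (v * d) := by push_cast; ring
    rw [h1, ← expS_mul, ← expS_pow, pow_add, pow_mul]
    simp only [map_mul, map_pow]
    ring
  calc (∑ i ∈ range w, ∑ a ∈ range d,
        PowerSeries.C (χ ((d * i + a : ℕ) : ZMod d) * η ^ (d * i + a)) * expS (v * (d * i + a : ℕ)))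
        * (PowerSeries.C (η ^ d) * expS (v * d) - 1)
      = ((∑ a ∈ range d, PowerSeries.C (χ (a : ZMod d) * η ^ a) * expS (v * a)) *
          ∑ i ∈ range w, (PowerSeries.C (η ^ d) * expS (v * d)) ^ i) *
          (PowerSeries.C (η ^ d) * expS (v * d) - 1) := by
        congr 1
        rw [Finset.mul_sum]
        refine Finset.sum_congr rfl fun i _ => ?_
        rw [Finset.sum_mul]
        exact Finset.sum_congr rfl fun a ha => hterm i a ha
    _ = _ := by
        rw [mul_assoc, geom_sum_mul, mul_pow, ← map_pow, expS_pow, ← pow_mul]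
        congr 3
        ring

lemma coeff_eq (w v : ℂ) (B : ℕ → ℂ) (N n : ℕ) (c : ℕ → ℂ) :
    ∑ j ∈ range (n + 1), (n.choose j : ℂ) * v ^ (j + 1) * w ^ (n - j) * B (n - j) *
        (∑ l ∈ range N, c l * (l : ℂ) ^ j)
      = (n.factorial : ℂ) * PowerSeries.coeff n
          (PowerSeries.C v * rescale w (PowerSeries.mk fun k => B k / k.factorial) *
            ∑ l ∈ range N, PowerSeries.C (c l) * expS (v * l)) := by
  have hS : ∀ m : ℕ,
      PowerSeries.coeff m (∑ l ∈ range N, PowerSeries.C (c l) * expS (v * l))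
        = (∑ l ∈ range N, c l * (l : ℂ) ^ m) * v ^ m / m.factorial := by
    intro m
    simp only [map_sum, PowerSeries.coeff_C_mul, expS, PowerSeries.coeff_mk]
    rw [Finset.sum_mul, Finset.sum_div]
    refine Finset.sum_congr rfl fun l _ => ?_
    rw [mul_pow]; ring
  rw [mul_assoc, PowerSeries.coeff_C_mul, PowerSeries.coeff_mul,
    Finset.Nat.sum_antidiagonal_eq_sum_range_succ_mk, ← Finset.sum_range_reflect]
  rw [Finset.mul_sum, Finset.mul_sum]
  refine Finset.sum_congr rfl fun k hk => ?_
  have hk' : k ≤ n := Nat.lt_succ_iff.mp (Finset.mem_range.mp hk)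
  have h1 : n + 1 - 1 - k = n - k := by omega
  have h2 : n - (n - k) = k := Nat.sub_sub_self hk'
  rw [h1, h2, Nat.choose_symm hk', coeff_rescale, PowerSeries.coeff_mk, hS]
  have hch : (n.choose k : ℂ) = n.factorial / (k.factorial * (n - k).factorial) :=
    Nat.cast_choose ℂ hk'
  rw [hch]
  have hkf : (k.factorial : ℂ) ≠ 0 := Nat.cast_ne_zero.mpr k.factorial_ne_zero
  have hnkf : ((n - k).factorial : ℂ) ≠ 0 := Nat.cast_ne_zero.mpr (n - k).factorial_ne_zero
  field_simp
  ring

/-- Symmetry identity (Remark after Theorem 1, case `m = 1`, `y = 0`), with both sides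
multiplied by `w₁w₂`. `B1`, `B2` are the generalized twisted Bernoulli polynomials
attached to `χ` with twists `ξ^{w₁}` and `ξ^{w₂}` respectively. -/
theorem generalized_twisted_bernoulli_symmetry_order_one
    (d w₁ w₂ : ℕ) (hd : 0 < d) (hw₁ : 0 < w₁) (hw₂ : 0 < w₂)
    (ξ : ℂ) (hξ : ∃ m : ℕ, 0 < m ∧ ξ ^ m = 1)
    (χ : DirichletCharacter ℂ d) (B1 B2 : ℕ → ℂ → ℂ)
    (hB1 : ∀ x : ℂ,
      (PowerSeries.mk fun n => B1 n x / n.factorial) *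
          (PowerSeries.C ((ξ ^ w₁) ^ d) * expS d - 1) =
        PowerSeries.X *
          (∑ a ∈ Finset.range d, PowerSeries.C (χ (a : ZMod d) * (ξ ^ w₁) ^ a) * expS a) *
          expS x)
    (hB2 : ∀ x : ℂ,
      (PowerSeries.mk fun n => B2 n x / n.factorial) *
          (PowerSeries.C ((ξ ^ w₂) ^ d) * expS d - 1) =
        PowerSeries.X *
          (∑ a ∈ Finset.range d, PowerSeries.C (χ (a : ZMod d) * (ξ ^ w₂) ^ a) * expS a) *
          expS x)
    (n : ℕ) (x : ℂ) :
    ∑ j ∈ Finset.range (n + 1), (n.choose j : ℂ) * (w₂ : ℂ) ^ (j + 1) * (w₁ : ℂ) ^ (n - j) *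
        B1 (n - j) ((w₂ : ℂ) * x) *
        (∑ l ∈ Finset.range (w₁ * d), χ (l : ZMod d) * (ξ ^ w₂) ^ l * (l : ℂ) ^ j) =
      ∑ j ∈ Finset.range (n + 1), (n.choose j : ℂ) * (w₁ : ℂ) ^ (j + 1) * (w₂ : ℂ) ^ (n - j) *
        B2 (n - j) ((w₁ : ℂ) * x) *
        (∑ l ∈ Finset.range (w₂ * d), χ (l : ZMod d) * (ξ ^ w₁) ^ l * (l : ℂ) ^ j) := by
  have hd1 : ((w₁ : ℂ) * d) ≠ 0 :=
    mul_ne_zero (Nat.cast_ne_zero.mpr hw₁.ne') (Nat.cast_ne_zero.mpr hd.ne')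
  have hd2 : ((w₂ : ℂ) * d) ≠ 0 :=
    mul_ne_zero (Nat.cast_ne_zero.mpr hw₂.ne') (Nat.cast_ne_zero.mpr hd.ne')
  set D₁ : PowerSeries ℂ := PowerSeries.C ((ξ ^ w₁) ^ d) * expS ((w₁ : ℂ) * d) - 1 with hD₁def
  set D₂ : PowerSeries ℂ := PowerSeries.C ((ξ ^ w₂) ^ d) * expS ((w₂ : ℂ) * d) - 1 with hD₂def
  have hD₁ : D₁ ≠ 0 := D_ne_zero _ _ hd1
  have hD₂ : D₂ ≠ 0 := D_ne_zero _ _ hd2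
  -- rescaled generating function identities
  have hresc : ∀ w : ℕ,
      rescale (w : ℂ) (∑ a ∈ range d,
          PowerSeries.C (χ (a : ZMod d)) * PowerSeries.C ((ξ ^ w) ^ a) * expS a)
        = ∑ a ∈ range d, PowerSeries.C (χ (a : ZMod d) * (ξ ^ w) ^ a) * expS ((w : ℂ) * a) := by
    intro w
    rw [map_sum]
    refine Finset.sum_congr rfl fun a _ => ?_
    rw [map_mul, map_mul, rescale_C', rescale_C', rescale_expS, ← map_mul,
      mul_comm ((a : ℕ) : ℂ)]
  have hR1 := congrArg (rescale (w₁ : ℂ)) (hB1 ((w₂ : ℂ) * x))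
  have hR2 := congrArg (rescale (w₂ : ℂ)) (hB2 ((w₁ : ℂ) * x))
  simp only [map_mul, map_sub, map_one, rescale_X, rescale_expS, rescale_C'] at hR1 hR2
  rw [hresc, show ((d : ℂ) * (w₁ : ℂ)) = ((w₁ : ℂ) * d) from mul_comm _ _] at hR1
  rw [hresc, show ((d : ℂ) * (w₂ : ℂ)) = ((w₂ : ℂ) * d) from mul_comm _ _] at hR2
  have hG1 := S_mul_D d w₁ χ (ξ ^ w₂) (w₂ : ℂ)
  have hG2 := S_mul_D d w₂ χ (ξ ^ w₁) (w₁ : ℂ)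
  -- key power series identity
  have key : PowerSeries.C (w₂ : ℂ) *
        rescale (w₁ : ℂ) (PowerSeries.mk fun k => B1 k ((w₂ : ℂ) * x) / k.factorial) *
        (∑ l ∈ range (w₁ * d),
          PowerSeries.C (χ (l : ZMod d) * (ξ ^ w₂) ^ l) * expS ((w₂ : ℂ) * l))
      = PowerSeries.C (w₁ : ℂ) *
        rescale (w₂ : ℂ) (PowerSeries.mk fun k => B2 k ((w₁ : ℂ) * x) / k.factorial) *
        (∑ l ∈ range (w₂ * d),
          PowerSeries.C (χ (l : ZMod d) * (ξ ^ w₁) ^ l) * expS ((w₁ : ℂ) * l)) := by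
    apply mul_right_cancel₀ (b := D₁ * D₂) (mul_ne_zero hD₁ hD₂)
    calc PowerSeries.C (w₂ : ℂ) *
          rescale (w₁ : ℂ) (PowerSeries.mk fun k => B1 k ((w₂ : ℂ) * x) / k.factorial) *
          (∑ l ∈ range (w₁ * d),
            PowerSeries.C (χ (l : ZMod d) * (ξ ^ w₂) ^ l) * expS ((w₂ : ℂ) * l)) * (D₁ * D₂)
        = PowerSeries.C (w₂ : ℂ) *
          ((rescale (w₁ : ℂ) (PowerSeries.mk fun k => B1 k ((w₂ : ℂ) * x) / k.factorial) * D₁) *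
            ((∑ l ∈ range (w₁ * d),
              PowerSeries.C (χ (l : ZMod d) * (ξ ^ w₂) ^ l) * expS ((w₂ : ℂ) * l)) * D₂)) := by
          ring
      _ = PowerSeries.C (w₁ : ℂ) *
          ((rescale (w₂ : ℂ) (PowerSeries.mk fun k => B2 k ((w₁ : ℂ) * x) / k.factorial) * D₂) *
            ((∑ l ∈ range (w₂ * d),
              PowerSeries.C (χ (l : ZMod d) * (ξ ^ w₁) ^ l) * expS ((w₁ : ℂ) * l)) * D₁)) := by
          rw [hD₁def, hD₂def, hR1, hR2, hG1, hG2]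
          rw [show ((ξ ^ w₂) ^ (d * w₁)) = ((ξ ^ w₁) ^ (d * w₂)) by
            rw [← pow_mul, ← pow_mul]; ring_nf]
          rw [show ((w₂ : ℂ) * d * w₁) = ((w₁ : ℂ) * d * w₂) by ring]
          rw [show ((w₂ : ℂ) * x * w₁) = ((w₁ : ℂ) * x * w₂) by ring]
          ring
      _ = _ := by ring
  have h1 := coeff_eq (w₁ : ℂ) (w₂ : ℂ) (fun k => B1 k ((w₂ : ℂ) * x)) (w₁ * d) n
    (fun l => χ (l : ZMod d) * (ξ ^ w₂) ^ l)
  have h2 := coeff_eq (w₂ : ℂ) (w₁ : ℂ) (fun k => B2 k ((w₁ : ℂ) * x)) (w₂ * d) n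
    (fun l => χ (l : ZMod d) * (ξ ^ w₁) ^ l)
  rw [h1, h2, key]
end
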